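/- For ρ_TE-balls in F₂^{n×L} with L ≥ 3: V_TE(1) = 1 + n, V_TE(2) = 1 + (n² + 5n)/2, and V_TE(3) = 1 + (n³ + 12n² + 29n)/6. -/
import Mathlib

/-- Row-wise tail-erasure distance: 0 if rows equal, else `L - (least differing index)`,
which equals `L - min{i : x_i ≠ y_i} + 1` in 1-indexed notation. -/
def rhoRow {L : ℕ} (x y : Fin L → ZMod 2) : ℕ :=
  if h : x = y then 0
  else
    L - (Finset.univ.filter (fun j => x j ≠ y j)).min' (by
      obtain ⟨j, hj⟩ := Function.ne_iff.mp h
      exact ⟨j, Finset.mem_filter.mpr ⟨Finset.mem_univ j, hj⟩⟩)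

/-- The tail-erasure distance on binary `n × L` arrays: sum of row distances. -/
def rhoTE {n L : ℕ} (X Y : Fin n → Fin L → ZMod 2) : ℕ :=
  ∑ i, rhoRow (X i) (Y i)

open Finset

lemma zmod2_ne_zero {a : ZMod 2} (h : a ≠ 0) : a = 1 := by revert h; revert a; decide

lemma rhoRow_sub {L : ℕ} (x y : Fin L → ZMod 2) : rhoRow x y = rhoRow 0 (x - y) := by
  unfold rhoRow
  have h1 : (x = y) ↔ ((0 : Fin L → ZMod 2) = x - y) := by
    constructor
    · rintro rfl; simp
    · intro h; have := h.symm; rwa [sub_eq_zero] at this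
  have h2 : (univ.filter (fun j => x j ≠ y j)) =
      (univ.filter (fun j => (0 : Fin L → ZMod 2) j ≠ (x - y) j)) := by
    ext j; simp [sub_eq_zero, eq_comm, sub_ne_zero]
  by_cases h : x = y
  · rw [dif_pos h, dif_pos (h1.mp h)]
  · rw [dif_neg h, dif_neg (fun hh => h (h1.mpr hh))]
    congr 1
    simp only [h2]

lemma w_pos {L : ℕ} {z : Fin L → ZMod 2} (h : z ≠ 0) : 1 ≤ rhoRow 0 z := by
  unfold rhoRow
  rw [dif_neg (fun hh => h hh.symm)]
  have := ((univ.filter (fun j => (0 : Fin L → ZMod 2) j ≠ z j)).min' (by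
      obtain ⟨j, hj⟩ := Function.ne_iff.mp (fun hh => h hh.symm : ¬ (0:Fin L → ZMod 2) = z)
      exact ⟨j, Finset.mem_filter.mpr ⟨Finset.mem_univ j, hj⟩⟩)).isLt
  omega

lemma w_eq_zero_iff {L : ℕ} (z : Fin L → ZMod 2) : rhoRow 0 z = 0 ↔ z = 0 := by
  constructor
  · intro h
    by_contra hz
    have := w_pos hz
    omega
  · rintro rfl; simp [rhoRow]

lemma w_eq_iff {L : ℕ} (k : ℕ) (hk1 : 1 ≤ k) (hkL : k ≤ L) (z : Fin L → ZMod 2) :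
    rhoRow 0 z = k ↔ (z ⟨L - k, by omega⟩ = 1 ∧ ∀ j : Fin L, (j : ℕ) < L - k → z j = 0) := by
  by_cases hz : z = 0
  · subst hz
    simp only [Pi.zero_apply]
    constructor
    · intro h
      have h0 : rhoRow (0 : Fin L → ZMod 2) 0 = 0 := (w_eq_zero_iff _).mpr rfl
      omega
    · rintro ⟨h, -⟩; exact absurd h (by decide)
  · unfold rhoRow
    rw [dif_neg (fun hh => hz hh.symm)]
    have hne : (univ.filter (fun j => (0 : Fin L → ZMod 2) j ≠ z j)).Nonempty := by
      obtain ⟨j, hj⟩ := Function.ne_iff.mp (fun hh => hz hh.symm : ¬ (0:Fin L → ZMod 2) = z)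
      exact ⟨j, Finset.mem_filter.mpr ⟨Finset.mem_univ j, hj⟩⟩
    set m := (univ.filter (fun j => (0 : Fin L → ZMod 2) j ≠ z j)).min' hne with hm
    have hmlt : (m : ℕ) < L := m.isLt
    constructor
    · intro h
      have hmval : (m : ℕ) = L - k := by omega
      have hmem : m ∈ univ.filter (fun j => (0 : Fin L → ZMod 2) j ≠ z j) :=
        Finset.min'_mem _ _
      rw [Finset.mem_filter] at hmem
      have hz1 : z m = 1 := zmod2_ne_zero (fun h0 => hmem.2 h0.symm)
      constructor
      · have : (⟨L - k, by omega⟩ : Fin L) = m := by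
          apply Fin.ext; simp [hmval]
        rw [this]; exact hz1
      · intro j hj
        by_contra hzj
        have : j ∈ univ.filter (fun j => (0 : Fin L → ZMod 2) j ≠ z j) := by
          simp only [Finset.mem_filter, Finset.mem_univ, true_and, Pi.zero_apply]
          exact fun h0 => hzj h0.symm
        have := Finset.min'_le _ _ this
        rw [Fin.le_def] at this
        omega
    · rintro ⟨h1, h2⟩
      have hmval : (m : ℕ) = L - k := by
        have hmem : m ∈ univ.filter (fun j => (0 : Fin L → ZMod 2) j ≠ z j) :=
          Finset.min'_mem _ _
        rw [Finset.mem_filter] at hmem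
        have hge : ¬ ((m : ℕ) < L - k) := fun h => hmem.2 (h2 m h).symm
        have hle : (m : ℕ) ≤ L - k := by
          have : (⟨L - k, by omega⟩ : Fin L) ∈
              univ.filter (fun j => (0 : Fin L → ZMod 2) j ≠ z j) := by
            simp only [Finset.mem_filter, Finset.mem_univ, true_and, Pi.zero_apply]
            rw [h1]; exact (by decide : (0 : ZMod 2) ≠ 1)
          have := Finset.min'_le _ _ this
          rw [Fin.le_def] at this
          exact this
        omega
      omega

lemma card_w_zero (L : ℕ) :
    (univ.filter fun z : Fin L → ZMod 2 => rhoRow 0 z = 0).card = 1 := by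
  have : (univ.filter fun z : Fin L → ZMod 2 => rhoRow 0 z = 0) = {0} := by
    ext z; simp [w_eq_zero_iff]
  rw [this, Finset.card_singleton]

lemma card_w_eq (L k : ℕ) (hk1 : 1 ≤ k) (hkL : k ≤ L) :
    (univ.filter fun z : Fin L → ZMod 2 => rhoRow 0 z = k).card = 2 ^ (k - 1) := by
  have hcard : (univ : Finset (Fin (k-1) → ZMod 2)).card = 2 ^ (k - 1) := by
    simp [Finset.card_univ]
  rw [← hcard]
  apply Finset.card_bij' (fun z _ => fun a : Fin (k-1) => z ⟨L - k + 1 + a, by omega⟩)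
    (fun t _ => fun j : Fin L =>
      if h1 : (j : ℕ) < L - k then 0 else if h2 : (j : ℕ) = L - k then 1
      else t ⟨(j : ℕ) - (L - k) - 1, by have := j.isLt; omega⟩)
  case hi => intro z hz; exact Finset.mem_univ _
  case hj =>
    intro t ht
    rw [Finset.mem_filter]
    refine ⟨Finset.mem_univ _, ?_⟩
    rw [w_eq_iff k hk1 hkL]
    constructor
    · beta_reduce
      split_ifs with h1 h2
      · simp at h1
      · rfl
      · simp at h2
    · intro j hj
      beta_reduce
      split_ifs with h1 h2
      rfl
  case left_inv =>
    intro z hz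
    rw [Finset.mem_filter, w_eq_iff k hk1 hkL] at hz
    obtain ⟨-, hz1, hz2⟩ := hz
    funext j
    beta_reduce
    split_ifs with h1 h2
    · exact (hz2 j h1).symm
    · rw [show j = (⟨L - k, by omega⟩ : Fin L) from Fin.ext h2]
      exact hz1.symm
    · refine congrArg z (Fin.ext ?_)
      have := j.isLt
      show L - k + 1 + ((j : ℕ) - (L - k) - 1) = (j : ℕ)
      omega
  case right_inv =>
    intro t ht
    funext a
    have ha := a.isLt
    beta_reduce
    split_ifs with h1 h2
    · simp at h1; omega
    · simp at h2; omega
    · refine congrArg t (Fin.ext ?_)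
      show ((⟨L - k + 1 + (a : ℕ), by omega⟩ : Fin L) : ℕ) - (L - k) - 1 = (a : ℕ)
      simp only [Fin.val_mk]
      omega

def cnt (L n r : ℕ) : ℕ :=
  (Finset.univ.filter fun Z : Fin n → Fin L → ZMod 2 =>
    ∑ i, rhoRow 0 (Z i) ≤ r).card

lemma cnt_zero (L r : ℕ) : cnt L 0 r = 1 := by
  unfold cnt
  rw [Finset.filter_true_of_mem (fun Z _ => by simp)]
  simp

lemma cnt_succ (L n r : ℕ) :
    cnt L (n + 1) r = ∑ k ∈ Finset.range (r + 1),
      (univ.filter fun z : Fin L → ZMod 2 => rhoRow 0 z = k).card * cnt L n (r - k) := by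
  -- step 1: product form
  have h1 : cnt L (n+1) r =
      ((univ : Finset ((Fin L → ZMod 2) × (Fin n → Fin L → ZMod 2))).filter
        fun p => rhoRow 0 p.1 + ∑ i, rhoRow 0 (p.2 i) ≤ r).card := by
    unfold cnt
    apply Finset.card_bij' (fun Z _ => (Z 0, fun i => Z i.succ))
      (fun p _ => Fin.cons p.1 p.2)
    case hi =>
      intro Z hZ
      rw [Finset.mem_filter] at hZ ⊢
      refine ⟨Finset.mem_univ _, ?_⟩
      have := hZ.2
      rwa [Fin.sum_univ_succ] at this
    case hj =>
      intro p hp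
      rw [Finset.mem_filter] at hp ⊢
      refine ⟨Finset.mem_univ _, ?_⟩
      rw [Fin.sum_univ_succ]
      simpa using hp.2
    case left_inv =>
      intro Z hZ
      exact (Fin.cons_self_tail Z)
    case right_inv =>
      intro p hp
      simp
  rw [h1, Finset.card_filter, Fintype.sum_prod_type]
  have h2 : ∀ z : Fin L → ZMod 2,
      (∑ Z : Fin n → Fin L → ZMod 2,
        if rhoRow 0 z + ∑ i, rhoRow 0 (Z i) ≤ r then 1 else 0) =
      ∑ k ∈ Finset.range (r + 1), if rhoRow 0 z = k then cnt L n (r - k) else 0 := by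
    intro z
    by_cases hz : rhoRow 0 z ≤ r
    · rw [Finset.sum_eq_single (rhoRow 0 z)]
      · rw [if_pos rfl]
        unfold cnt
        rw [Finset.card_filter]
        apply Finset.sum_congr rfl
        intro Z _
        congr 1
        simp only [eq_iff_iff]
        omega
      · intro k _ hk
        rw [if_neg (fun h => hk h.symm)]
      · intro h
        exact absurd (Finset.mem_range.mpr (by omega)) h
    · rw [Finset.sum_eq_zero, Finset.sum_eq_zero]
      · intro k hk
        rw [Finset.mem_range] at hk
        rw [if_neg (by omega)]
      · intro Z _
        rw [if_neg (by omega)]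
  rw [Finset.sum_congr rfl (fun z _ => h2 z), Finset.sum_comm]
  apply Finset.sum_congr rfl
  intro k _
  rw [← Finset.sum_filter, Finset.sum_const, smul_eq_mul]

lemma cnt_values (L : ℕ) (hL : 3 ≤ L) (n : ℕ) :
    cnt L n 0 = 1 ∧ cnt L n 1 = 1 + n ∧ 2 * cnt L n 2 = 2 + (n ^ 2 + 5 * n) ∧
      6 * cnt L n 3 = 6 + (n ^ 3 + 12 * n ^ 2 + 29 * n) := by
  induction n with
  | zero => refine ⟨cnt_zero L 0, ?_, ?_, ?_⟩ <;> simp [cnt_zero]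
  | succ n ih =>
    obtain ⟨h0, h1, h2, h3⟩ := ih
    have A0 := card_w_zero L
    have A1 := card_w_eq L 1 (by omega) (by omega)
    have A2 := card_w_eq L 2 (by omega) (by omega)
    have A3 := card_w_eq L 3 (by omega) (by omega)
    norm_num at A1 A2 A3
    have e0 : cnt L (n+1) 0 = cnt L n 0 := by
      rw [cnt_succ]
      simp [Finset.sum_range_succ, A0]
    have e1 : cnt L (n+1) 1 = cnt L n 1 + cnt L n 0 := by
      rw [cnt_succ]
      simp [Finset.sum_range_succ, A0, A1]
    have e2 : cnt L (n+1) 2 = cnt L n 2 + cnt L n 1 + 2 * cnt L n 0 := by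
      rw [cnt_succ]
      simp [Finset.sum_range_succ, A0, A1, A2]
    have e3 : cnt L (n+1) 3 = cnt L n 3 + cnt L n 2 + 2 * cnt L n 1 + 4 * cnt L n 0 := by
      rw [cnt_succ]
      simp [Finset.sum_range_succ, A0, A1, A2, A3]
    refine ⟨by rw [e0, h0], by rw [e1, h1, h0]; omega, ?_, ?_⟩
    · have q2 : (n+1)^2 = n^2+2*n+1 := by ring
      rw [e2, q2]
      generalize n ^ 2 = m at h2 ⊢
      omega
    · have q2 : (n+1)^2 = n^2+2*n+1 := by ring
      have q3 : (n+1)^3 = n^3+3*n^2+3*n+1 := by ring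
      rw [e3, q2, q3]
      generalize n ^ 2 = m at h2 h3 ⊢
      generalize n ^ 3 = m3 at h3 ⊢
      omega

lemma natcard_eq_cnt (n L r : ℕ) (X : Fin n → Fin L → ZMod 2) :
    Nat.card {Y : Fin n → Fin L → ZMod 2 | rhoTE X Y ≤ r} = cnt L n r := by
  have key : ∀ Y : Fin n → Fin L → ZMod 2,
      rhoTE X Y ≤ r ↔ ∑ i, rhoRow 0 ((X - Y) i) ≤ r := by
    intro Y
    unfold rhoTE
    have : ∀ i, rhoRow (X i) (Y i) = rhoRow 0 ((X - Y) i) := by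
      intro i
      rw [rhoRow_sub]
      rfl
    rw [Finset.sum_congr rfl (fun i _ => this i)]
  have e : {Y : Fin n → Fin L → ZMod 2 | rhoTE X Y ≤ r} ≃
      {Z : Fin n → Fin L → ZMod 2 | ∑ i, rhoRow 0 (Z i) ≤ r} := by
    refine (Equiv.subLeft X).subtypeEquiv fun Y => ?_
    simp only [Set.mem_setOf_eq, Equiv.subLeft_apply]
    exact key Y
  rw [Nat.card_congr e, Nat.card_eq_fintype_card]
  unfold cnt
  rw [← Fintype.card_subtype]
  rfl

/-- for `L ≥ 3`, the ρ_TE-ball sizes are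
`V_TE(1) = 1 + n`, `V_TE(2) = 1 + (n² + 5n)/2`, `V_TE(3) = 1 + (n³ + 12n² + 29n)/6`
(stated multiplied out to avoid division). -/
theorem stmt_12 (n L : ℕ) (hn : 1 ≤ n) (hL : 3 ≤ L) (X : Fin n → Fin L → ZMod 2) :
    Nat.card {Y : Fin n → Fin L → ZMod 2 | rhoTE X Y ≤ 1} = 1 + n ∧
    2 * Nat.card {Y : Fin n → Fin L → ZMod 2 | rhoTE X Y ≤ 2} = 2 + (n ^ 2 + 5 * n) ∧
    6 * Nat.card {Y : Fin n → Fin L → ZMod 2 | rhoTE X Y ≤ 3} =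
      6 + (n ^ 3 + 12 * n ^ 2 + 29 * n) := by
  obtain ⟨-, h1, h2, h3⟩ := cnt_values L hL n
  rw [natcard_eq_cnt, natcard_eq_cnt, natcard_eq_cnt]
  exact ⟨h1, h2, h3⟩
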